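/- Theorem 2 (recursive feasibility and correctness of MPC with time-interval decomposition), stated for a decomposition into N stages. Let 0 = T₀ < T₁ < ⋯ < T_N be integers, assume U ⊆ ℝ^m and W ⊆ ℝ^n are nonempty, and for each i ∈ {1, …, N} let P_i be a set of state sequences of length T_i − T_{i−1} + 1 (the trajectory requirement of stage i). Define terminal sets backwards by 𝒯_N = ℝ^n and, for 1 ≤ i < N, 𝒯_i = {y ∈ ℝ^n : ∃ inputs u_{T_i}, …, u_{T_N−1} ∈ U such that for all disturbances w_{T_i}, …, w_{T_N−1} ∈ W, the disturbed trajectory x_{T_i} = y, x_{j+1} = f(x_j, u_j) + w_j satisfies (x_{T_{j−1}}, …, x_{T_j}) ∈ P_j for every j ∈ {i+1, …, N}}. Suppose the initial state x₀ satisfies: there exist inputs u₀, …, u_{T₁−1} ∈ U such that for all disturbances w₀, …, w_{T₁−1} ∈ W, the disturbed trajectory (x₀, …, x_{T₁}) belongs to P₁ and x_{T₁} ∈ 𝒯₁. Then there exist maps g_i : ℝ^n → U^{T_i − T_{i−1}} for i = 1, …, N such that for every disturbance sequence w₀, …, w_{T_N−1} ∈ W, the closed-loop trajectory obtained by applying the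 input block g_i(x_{T_{i−1}}) during stage i (i.e., on time instants T_{i−1}, …, T_i − 1) satisfies (x_{T_{i−1}}, …, x_{T_i}) ∈ P_i for every i ∈ {1, …, N}. -/
import Mathlib


/-- The state space `ℝ^n`. -/
abbrev Vec (n : ℕ) := EuclideanSpace ℝ (Fin n)
/-- Auxiliary: disturbed trajectory, `i` steps after the starting instant `k`. -/
def dtrajAux {n m : ℕ} (f : Vec n → Vec m → Vec n) (k : ℕ) (x : Vec n)
    (u : ℕ → Vec m) (w : ℕ → Vec n) : ℕ → Vec n
  | 0 => x
  | i + 1 => f (dtrajAux f k x u w i) (u (k + i)) + w (k + i)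

/-- Disturbed trajectory: `dtraj f k x u w j` is the state at time `j ≥ k`, where the
state at time `k` is `x` and `x_{j+1} = f (x_j, u_j) + w_j`. -/
def dtraj {n m : ℕ} (f : Vec n → Vec m → Vec n) (k : ℕ) (x : Vec n)
    (u : ℕ → Vec m) (w : ℕ → Vec n) (j : ℕ) : Vec n :=
  dtrajAux f k x u w (j - k)

/-- Closed-loop stage-boundary states: `clBoundary f T g x0 w i` is the state `x_{T_i}`
of the closed-loop trajectory that starts at `x₀ = x0` and, during each stage `i`
(time instants `T_{i-1}, …, T_i - 1`), applies the input block `g i` evaluated at the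
stage-initial state `x_{T_{i-1}}`, under the disturbance sequence `w`. -/
def clBoundary {n m : ℕ} (f : Vec n → Vec m → Vec n) (T : ℕ → ℕ)
    (g : ℕ → Vec n → ℕ → Vec m) (x0 : Vec n) (w : ℕ → Vec n) : ℕ → Vec n
  | 0 => x0
  | i + 1 =>
    dtraj f (T i) (clBoundary f T g x0 w i)
      (g (i + 1) (clBoundary f T g x0 w i)) w (T (i + 1))

/-- The trajectory only depends on inputs/disturbances on the traversed window. -/
lemma dtrajAux_congr {n m : ℕ} (f : Vec n → Vec m → Vec n) (k : ℕ) (x : Vec n)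
    (u u' : ℕ → Vec m) (w w' : ℕ → Vec n) :
    ∀ i : ℕ, (∀ l, l < i → u (k + l) = u' (k + l) ∧ w (k + l) = w' (k + l)) →
      dtrajAux f k x u w i = dtrajAux f k x u' w' i
  | 0, _ => rfl
  | i + 1, h => by
    simp only [dtrajAux]
    rw [dtrajAux_congr f k x u u' w w' i (fun l hl => h l (by omega)),
      (h i (by omega)).1, (h i (by omega)).2]

lemma dtrajAux_add {n m : ℕ} (f : Vec n → Vec m → Vec n) (k : ℕ) (x : Vec n)
    (u : ℕ → Vec m) (w : ℕ → Vec n) (a : ℕ) :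
    ∀ d : ℕ, dtrajAux f k x u w (a + d) = dtrajAux f (k + a) (dtrajAux f k x u w a) u w d
  | 0 => rfl
  | d + 1 => by
    have h1 : a + (d + 1) = (a + d) + 1 := by omega
    rw [h1]
    simp only [dtrajAux]
    rw [dtrajAux_add f k x u w a d, Nat.add_assoc]

lemma dtraj_congr {n m : ℕ} (f : Vec n → Vec m → Vec n) (k : ℕ) (x : Vec n)
    (u u' : ℕ → Vec m) (w w' : ℕ → Vec n) (j : ℕ)
    (h : ∀ l, k ≤ l → l < j → u l = u' l ∧ w l = w' l) :
    dtraj f k x u w j = dtraj f k x u' w' j := by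
  unfold dtraj
  exact dtrajAux_congr f k x u u' w w' (j - k) (fun l hl => h (k + l)
    (Nat.le_add_right _ _) (by omega))

lemma dtraj_restart {n m : ℕ} (f : Vec n → Vec m → Vec n) (k : ℕ) (x : Vec n)
    (u : ℕ → Vec m) (w : ℕ → Vec n) (k' j : ℕ) (hk : k ≤ k') (hj : k' ≤ j) :
    dtraj f k x u w j = dtraj f k' (dtraj f k x u w k') u w j := by
  unfold dtraj
  have h := dtrajAux_add f k x u w (k' - k) (j - k')
  rw [show k + (k' - k) = k' from by omega] at h
  rw [show (k' - k) + (j - k') = j - k from by omega] at h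
  exact h

/-- Feasibility of stage `i` from state `y`: there is an admissible input block such
that, for every admissible disturbance, stage requirement `P i` holds and the terminal
state lands in `Term i`. -/
def Feas {n m : ℕ} (f : Vec n → Vec m → Vec n) (U : Set (Vec m)) (W : Set (Vec n))
    (T : ℕ → ℕ) (P : (i : ℕ) → Set (Fin (T i - T (i - 1) + 1) → Vec n))
    (Term : ℕ → Set (Vec n)) (i : ℕ) (y : Vec n) : Prop :=
  ∃ u : ℕ → Vec m, (∀ j, T (i - 1) ≤ j → j < T i → u j ∈ U) ∧
    ∀ w : ℕ → Vec n, (∀ j, T (i - 1) ≤ j → j < T i → w j ∈ W) →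
      ((fun p : Fin (T i - T (i - 1) + 1) =>
          dtraj f (T (i - 1)) y u w (T (i - 1) + (p : ℕ))) ∈ P i ∧
        dtraj f (T (i - 1)) y u w (T i) ∈ Term i)

open Classical in
/-- The MPC feedback: pick a certifying input block when one exists. -/
noncomputable def gdef {n m : ℕ} (f : Vec n → Vec m → Vec n) (U : Set (Vec m))
    (W : Set (Vec n)) (hU : U.Nonempty) (T : ℕ → ℕ)
    (P : (i : ℕ) → Set (Fin (T i - T (i - 1) + 1) → Vec n))
    (Term : ℕ → Set (Vec n)) (i : ℕ) (y : Vec n) : ℕ → Vec m :=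
  if h : Feas f U W T P Term i y then h.choose else fun _ => hU.some

lemma gdef_mem {n m : ℕ} (f : Vec n → Vec m → Vec n) (U : Set (Vec m))
    (W : Set (Vec n)) (hU : U.Nonempty) (T : ℕ → ℕ)
    (P : (i : ℕ) → Set (Fin (T i - T (i - 1) + 1) → Vec n))
    (Term : ℕ → Set (Vec n)) (i : ℕ) (y : Vec n) (j : ℕ)
    (h1 : T (i - 1) ≤ j) (h2 : j < T i) :
    gdef f U W hU T P Term i y j ∈ U := by
  classical
  unfold gdef
  split
  · next h => exact h.choose_spec.1 j h1 h2
  · exact hU.some_mem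

lemma gdef_spec {n m : ℕ} (f : Vec n → Vec m → Vec n) (U : Set (Vec m))
    (W : Set (Vec n)) (hU : U.Nonempty) (T : ℕ → ℕ)
    (P : (i : ℕ) → Set (Fin (T i - T (i - 1) + 1) → Vec n))
    (Term : ℕ → Set (Vec n)) {i : ℕ} {y : Vec n}
    (hy : Feas f U W T P Term i y) :
    ∀ w : ℕ → Vec n, (∀ j, T (i - 1) ≤ j → j < T i → w j ∈ W) →
      ((fun p : Fin (T i - T (i - 1) + 1) =>
          dtraj f (T (i - 1)) y (gdef f U W hU T P Term i y) w (T (i - 1) + (p : ℕ))) ∈ P i ∧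
        dtraj f (T (i - 1)) y (gdef f U W hU T P Term i y) w (T i) ∈ Term i) := by
  classical
  unfold gdef
  rw [dif_pos hy]
  exact hy.choose_spec.2

/-- Theorem 2: recursive feasibility and correctness of MPC with time-interval
decomposition into `N` stages. If the robust stage-1 problem with terminal
constraint `𝒯₁` is feasible from `x₀`, then there are feedback input blocks
`g_i : ℝ^n → U^{T_i - T_{i-1}}` such that, for every disturbance sequence, the
closed-loop trajectory satisfies the requirement `P_i` of every stage `i`. -/
theorem mpc_time_interval_decomposition {n m : ℕ}
    (f : Vec n → Vec m → Vec n) (U : Set (Vec m)) (W : Set (Vec n))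
    (hU : U.Nonempty) (hW : W.Nonempty)
    (N : ℕ) (hN : 1 ≤ N) (T : ℕ → ℕ) (hT0 : T 0 = 0)
    (hTmono : ∀ i, i < N → T i < T (i + 1))
    (P : (i : ℕ) → Set (Fin (T i - T (i - 1) + 1) → Vec n))
    (Term : ℕ → Set (Vec n))
    (hTermN : Term N = Set.univ)
    (hTerm : ∀ i, 1 ≤ i → i < N → Term i =
      {y : Vec n | ∃ u : ℕ → Vec m,
        (∀ j, T i ≤ j → j < T N → u j ∈ U) ∧
        ∀ w : ℕ → Vec n, (∀ j, T i ≤ j → j < T N → w j ∈ W) →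
          ∀ jj, i + 1 ≤ jj → jj ≤ N →
            (fun p : Fin (T jj - T (jj - 1) + 1) =>
              dtraj f (T i) y u w (T (jj - 1) + (p : ℕ))) ∈ P jj})
    (x0 : Vec n)
    (hfeas : ∃ u : ℕ → Vec m,
      (∀ j, j < T 1 → u j ∈ U) ∧
      ∀ w : ℕ → Vec n, (∀ j, j < T 1 → w j ∈ W) →
        (fun p : Fin (T 1 - T 0 + 1) => dtraj f (T 0) x0 u w (T 0 + (p : ℕ))) ∈ P 1 ∧
        dtraj f (T 0) x0 u w (T 1) ∈ Term 1) :
    ∃ g : ℕ → Vec n → ℕ → Vec m,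
      (∀ i y j, 1 ≤ i → i ≤ N → T (i - 1) ≤ j → j < T i → g i y j ∈ U) ∧
      ∀ w : ℕ → Vec n, (∀ j, j < T N → w j ∈ W) →
        ∀ i, 1 ≤ i → i ≤ N →
          (fun p : Fin (T i - T (i - 1) + 1) =>
            dtraj f (T (i - 1)) (clBoundary f T g x0 w (i - 1))
              (g i (clBoundary f T g x0 w (i - 1))) w (T (i - 1) + (p : ℕ))) ∈ P i := by
  classical
  -- Monotonicity of T on [0, N]
  have hTle : ∀ a b, a ≤ b → b ≤ N → T a ≤ T b := by
    intro a b hab hbN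
    induction b with
    | zero =>
      obtain rfl := Nat.le_zero.mp hab
      exact le_rfl
    | succ b ih =>
      rcases eq_or_lt_of_le hab with rfl | h
      · exact le_rfl
      · exact le_trans (ih (by omega) (by omega)) (le_of_lt (hTmono b (by omega)))
  -- Key: membership in Term i implies feasibility of stage i+1
  have keyTerm : ∀ i, 1 ≤ i → i < N → ∀ y ∈ Term i, Feas f U W T P Term (i + 1) y := by
    intro i h1 hiN y hy
    rw [hTerm i h1 hiN] at hy
    obtain ⟨u, huU, hcert⟩ := hy
    have hTiN : T (i + 1) ≤ T N := hTle (i + 1) N (by omega) le_rfl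
    have hTT : T i ≤ T (i + 1) := le_of_lt (hTmono i hiN)
    refine ⟨u, ?_, ?_⟩
    · intro j hj1 hj2
      simp only [Nat.add_sub_cancel] at hj1
      exact huU j hj1 (lt_of_lt_of_le hj2 hTiN)
    · intro w hw
      simp only [Nat.add_sub_cancel] at hw ⊢
      set wext : ℕ → Vec n := fun j => if j < T (i + 1) then w j else hW.some with hwext
      have hwextW : ∀ j, T i ≤ j → j < T N → wext j ∈ W := by
        intro j hj1 hj2
        by_cases h : j < T (i + 1)
        · simpa only [hwext, if_pos h] using hw j hj1 h
        · simp only [hwext, if_neg h]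
          exact hW.some_mem
      constructor
      · have hc := hcert wext hwextW (i + 1) le_rfl (by omega)
        simp only [Nat.add_sub_cancel] at hc
        have heq : (fun p : Fin (T (i + 1) - T i + 1) =>
            dtraj f (T i) y u w (T i + (p : ℕ))) =
            (fun p : Fin (T (i + 1) - T i + 1) =>
              dtraj f (T i) y u wext (T i + (p : ℕ))) := by
          funext p
          have hp : (p : ℕ) < T (i + 1) - T i + 1 := p.isLt
          refine dtraj_congr f (T i) y u u w wext (T i + (p : ℕ)) ?_
          intro l hl1 hl2
          refine ⟨rfl, ?_⟩
          simp only [hwext]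
          rw [if_pos (by omega)]
        exact Set.mem_of_eq_of_mem heq hc
      · by_cases hN1 : i + 1 = N
        · rw [hN1, hTermN]
          trivial
        · have hlt : i + 1 < N := by omega
          rw [hTerm (i + 1) (by omega) hlt]
          refine ⟨u, fun j hj1 hj2 => huU j (le_trans hTT hj1) hj2, ?_⟩
          intro w2 hw2 jj hjj1 hjj2
          set w'' : ℕ → Vec n := fun j => if j < T (i + 1) then w j else w2 j with hw''d
          have hw''W : ∀ j, T i ≤ j → j < T N → w'' j ∈ W := by
            intro j hj1 hj2
            by_cases h : j < T (i + 1)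
            · simp only [hw''d, if_pos h]
              exact hw j hj1 h
            · simp only [hw''d, if_neg h]
              exact hw2 j (by omega) hj2
          have hc := hcert w'' hw''W jj (by omega) hjj2
          have hX : dtraj f (T i) y u w (T (i + 1)) = dtraj f (T i) y u w'' (T (i + 1)) := by
            refine dtraj_congr f (T i) y u u w w'' (T (i + 1)) ?_
            intro l hl1 hl2
            refine ⟨rfl, ?_⟩
            simp only [hw''d, if_pos hl2]
          have hT1jj : T (i + 1) ≤ T (jj - 1) := hTle (i + 1) (jj - 1) (by omega) (by omega)
          have heq : (fun p : Fin (T jj - T (jj - 1) + 1) =>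
              dtraj f (T (i + 1)) (dtraj f (T i) y u w (T (i + 1))) u w2 (T (jj - 1) + (p : ℕ))) =
              (fun p : Fin (T jj - T (jj - 1) + 1) =>
                dtraj f (T i) y u w'' (T (jj - 1) + (p : ℕ))) := by
            funext p
            have h1 : dtraj f (T i) y u w'' (T (jj - 1) + (p : ℕ)) =
                dtraj f (T (i + 1)) (dtraj f (T i) y u w'' (T (i + 1))) u w''
                  (T (jj - 1) + (p : ℕ)) :=
              dtraj_restart f (T i) y u w'' (T (i + 1)) (T (jj - 1) + (p : ℕ)) hTT
                (le_trans hT1jj (Nat.le_add_right _ _))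
            rw [h1, ← hX]
            refine dtraj_congr f (T (i + 1)) _ u u w2 w'' (T (jj - 1) + (p : ℕ)) ?_
            intro l hl1 hl2
            exact ⟨rfl, by simp only [hw''d, if_neg (Nat.not_lt.mpr hl1)]⟩
          exact Set.mem_of_eq_of_mem heq hc
  -- Initial feasibility
  have hF1 : Feas f U W T P Term 1 x0 := by
    obtain ⟨u, huU, h⟩ := hfeas
    refine ⟨u, fun j _ hj2 => huU j hj2, fun w hw => h w fun j hj => hw j ?_ hj⟩
    show T 0 ≤ j
    rw [hT0]
    exact Nat.zero_le j
  refine ⟨gdef f U W hU T P Term,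
    fun i y j _ _ h1 h2 => gdef_mem f U W hU T P Term i y j h1 h2, ?_⟩
  intro w hwW
  -- Closed-loop recursive feasibility
  have hB : ∀ i, i < N →
      Feas f U W T P Term (i + 1) (clBoundary f T (gdef f U W hU T P Term) x0 w i) := by
    intro i
    induction i with
    | zero => exact fun _ => hF1
    | succ i ih =>
      intro hiN
      have hBi := ih (by omega)
      have hwadm : ∀ j, T ((i + 1) - 1) ≤ j → j < T (i + 1) → w j ∈ W :=
        fun j _ hj2 => hwW j (lt_of_lt_of_le hj2 (hTle (i + 1) N (by omega) le_rfl))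
      have hend := (gdef_spec f U W hU T P Term hBi w hwadm).2
      exact keyTerm (i + 1) (by omega) hiN _ hend
  intro i h1i hiN
  have hBi := hB (i - 1) (by omega)
  rw [show i - 1 + 1 = i from by omega] at hBi
  have hwadm : ∀ j, T (i - 1) ≤ j → j < T i → w j ∈ W :=
    fun j _ hj2 => hwW j (lt_of_lt_of_le hj2 (hTle i N hiN le_rfl))
  exact (gdef_spec f U W hU T P Term hBi w hwadm).1
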